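/- Let Ω ⊂ ℝⁿ be open and bounded, u : closure(Ω) → ℝ continuous, C² on Ω, with u ≥ 0 on closure(Ω), u = 0 on ∂Ω, and suppose u satisfies (d₂ + 2a₂₂u)Δu + 2a₂₂|∇u|² + u(1 - a₂w - u) = 0 on Ω, where d₂ > 0, a₂₂ ≥ 0, a₂ ≥ 0, and w : Ω → ℝ is nonnegative. Then u ≤ 1 on closure(Ω). -/

import Mathlib

open EuclideanSpace in
/-- The Laplacian of a function on Euclidean space, via iterated `fderiv`. -/
noncomputable def laplacian {n : ℕ} (f : EuclideanSpace ℝ (Fin n) → ℝ)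
    (x : EuclideanSpace ℝ (Fin n)) : ℝ :=
  ∑ i : Fin n, fderiv ℝ (fun y => fderiv ℝ f y (single i 1)) x (single i 1)

open EuclideanSpace in
/-- The squared Euclidean norm of the gradient of `f` at `x`. -/
noncomputable def gradNormSq {n : ℕ} (f : EuclideanSpace ℝ (Fin n) → ℝ)
    (x : EuclideanSpace ℝ (Fin n)) : ℝ :=
  ∑ i : Fin n, (fderiv ℝ f x (single i 1)) ^ 2

open Filter Topology

/-- Second derivative test at a local maximum. -/
lemma secondDeriv_nonpos_of_isLocalMax {g : ℝ → ℝ} (hmax : IsLocalMax g 0)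
    (hg : ∀ᶠ t in 𝓝 (0 : ℝ), DifferentiableAt ℝ g t)
    (hg' : DifferentiableAt ℝ (deriv g) 0) :
    deriv (deriv g) 0 ≤ 0 := by
  by_contra hc
  push_neg at hc
  set c := deriv (deriv g) 0 with hcdef
  have d0 : deriv g 0 = 0 := hmax.deriv_eq_zero
  have hslope : Tendsto (slope (deriv g) 0) (𝓝[≠] 0) (𝓝 c) :=
    hasDerivAt_iff_tendsto_slope.mp hg'.hasDerivAt
  have h1 : ∀ᶠ t in 𝓝[≠] (0 : ℝ), c / 2 < slope (deriv g) 0 t :=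
    hslope.eventually_const_lt (half_lt_self hc)
  rw [eventually_nhdsWithin_iff] at h1
  have hall : ∀ᶠ t in 𝓝 (0 : ℝ),
      (t ∈ ({0}ᶜ : Set ℝ) → c / 2 < slope (deriv g) 0 t) ∧
      DifferentiableAt ℝ g t ∧ g t ≤ g 0 := h1.and (hg.and hmax)
  rw [Metric.eventually_nhds_iff] at hall
  obtain ⟨ε, hε, hP⟩ := hall
  set a := ε / 2 with hadef
  have ha : 0 < a := half_pos hε
  have hmem : ∀ t ∈ Set.Icc (0 : ℝ) a, dist t (0 : ℝ) < ε := by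
    intro t ht
    rw [Real.dist_eq, sub_zero, abs_of_nonneg ht.1]
    exact lt_of_le_of_lt ht.2 (half_lt_self hε)
  have hcont : ContinuousOn g (Set.Icc (0 : ℝ) a) := fun t ht =>
    ((hP (hmem t ht)).2.1).continuousAt.continuousWithinAt
  have hderiv : ∀ t ∈ interior (Set.Icc (0 : ℝ) a), 0 < deriv g t := by
    intro t ht
    rw [interior_Icc] at ht
    have htne : t ∈ ({0}ᶜ : Set ℝ) := fun h => absurd (h ▸ ht.1) (lt_irrefl 0)
    have hd : dist t (0 : ℝ) < ε := hmem t ⟨ht.1.le, ht.2.le⟩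
    have hs := (hP hd).1 htne
    rw [slope_def_field, d0, sub_zero, sub_zero] at hs
    have hq : 0 < deriv g t / t := lt_trans (half_pos hc) hs
    rcases div_pos_iff.mp hq with ⟨h, _⟩ | ⟨_, h⟩
    · exact h
    · exact absurd ht.1 (not_lt.mpr h.le)
  have hmono : StrictMonoOn g (Set.Icc (0 : ℝ) a) :=
    strictMonoOn_of_deriv_pos (convex_Icc 0 a) hcont hderiv
  have hlt : g 0 < g a :=
    hmono (Set.left_mem_Icc.mpr ha.le) (Set.right_mem_Icc.mpr ha.le) ha
  have hle : g a ≤ g 0 := by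
    have : dist a (0 : ℝ) < ε := hmem a (Set.right_mem_Icc.mpr ha.le)
    exact (hP this).2.2
  linarith

theorem stmt_8 {n : ℕ} (Ω : Set (EuclideanSpace ℝ (Fin n)))
    (hΩ : IsOpen Ω) (hbd : Bornology.IsBounded Ω)
    (u w : EuclideanSpace ℝ (Fin n) → ℝ)
    (hcont : ContinuousOn u (closure Ω)) (hu2 : ContDiffOn ℝ 2 u Ω)
    (hupos : ∀ x ∈ closure Ω, 0 ≤ u x)
    (hbdry : ∀ x ∈ frontier Ω, u x = 0)
    (d₂ a₂₂ a₂ : ℝ) (hd₂ : 0 < d₂) (ha₂₂ : 0 ≤ a₂₂) (ha₂ : 0 ≤ a₂)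
    (hw : ∀ x ∈ Ω, 0 ≤ w x)
    (hpde : ∀ x ∈ Ω,
      (d₂ + 2 * a₂₂ * u x) * laplacian u x + 2 * a₂₂ * gradNormSq u x
        + u x * (1 - a₂ * w x - u x) = 0) :
    ∀ x ∈ closure Ω, u x ≤ 1 := by
  rcases (closure Ω).eq_empty_or_nonempty with he | hne
  · intro x hx; rw [he] at hx; exact absurd hx (Set.notMem_empty x)
  have hcomp : IsCompact (closure Ω) := hbd.isCompact_closure
  obtain ⟨x₀, hx₀mem, hx₀max⟩ := hcomp.exists_isMaxOn hne hcont
  intro x hx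
  by_contra hgt1
  push_neg at hgt1
  have h1 : 1 < u x₀ := lt_of_lt_of_le hgt1 (hx₀max hx)
  have hx₀Ω : x₀ ∈ Ω := by
    have := closure_eq_interior_union_frontier Ω ▸ hx₀mem
    rcases this with h | h
    · rwa [hΩ.interior_eq] at h
    · exact absurd (hbdry x₀ h) (by linarith)
  have hloc : IsLocalMax u x₀ := by
    filter_upwards [hΩ.mem_nhds hx₀Ω] with y hy using hx₀max (subset_closure hy)
  have hfzero : fderiv ℝ u x₀ = 0 := hloc.fderiv_eq_zero
  have hud : DifferentiableOn ℝ u Ω := hu2.differentiableOn two_ne_zero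
  have hfd : ContDiffOn ℝ 1 (fun y => fderiv ℝ u y) Ω :=
    hu2.fderiv_of_isOpen hΩ (by norm_num)
  have key : ∀ i : Fin n,
      fderiv ℝ (fun y => fderiv ℝ u y (EuclideanSpace.single i 1)) x₀
        (EuclideanSpace.single i 1) ≤ 0 := by
    intro i
    set e := EuclideanSpace.single i (1 : ℝ) with he
    set L : ℝ → EuclideanSpace ℝ (Fin n) := fun t => x₀ + t • e with hLdef
    have hL0 : L 0 = x₀ := by simp [hLdef]
    have hLd : ∀ t : ℝ, HasDerivAt L e t := by
      intro t
      simpa [hLdef] using ((hasDerivAt_id t).smul_const e).const_add x₀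
    have hLc : Continuous L := continuous_const.add (continuous_id.smul continuous_const)
    have hΩt : ∀ᶠ t in 𝓝 (0 : ℝ), L t ∈ Ω :=
      hLc.continuousAt.preimage_mem_nhds (hL0 ▸ hΩ.mem_nhds hx₀Ω)
    set g : ℝ → ℝ := fun t => u (L t) with hgdef
    have hgd : ∀ᶠ t in 𝓝 (0 : ℝ),
        DifferentiableAt ℝ g t ∧ deriv g t = fderiv ℝ u (L t) e := by
      filter_upwards [hΩt] with t ht
      have hdu : DifferentiableAt ℝ u (L t) :=
        (hud (L t) ht).differentiableAt (hΩ.mem_nhds ht)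
      have hcomp2 : HasDerivAt g (fderiv ℝ u (L t) e) t :=
        hdu.hasFDerivAt.comp_hasDerivAt t (hLd t)
      exact ⟨hcomp2.differentiableAt, hcomp2.deriv⟩
    have hmaxg : IsLocalMax g 0 := by
      have h2 : Tendsto L (𝓝 0) (𝓝 x₀) := hL0 ▸ hLc.continuousAt
      have h3 : ∀ᶠ t in 𝓝 (0 : ℝ), u (L t) ≤ u x₀ := h2.eventually hloc
      have h4 : g 0 = u x₀ := by rw [hgdef]; simp [hL0]
      filter_upwards [h3] with t ht
      rw [h4]; exact ht
    have hh : DifferentiableAt ℝ (fun y => fderiv ℝ u y e) x₀ := by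
      have hd1 : DifferentiableAt ℝ (fun y => fderiv ℝ u y) x₀ :=
        (hfd.differentiableOn one_ne_zero x₀ hx₀Ω).differentiableAt (hΩ.mem_nhds hx₀Ω)
      exact hd1.clm_apply (differentiableAt_const e)
    have hderiv2 : HasDerivAt (fun t => fderiv ℝ u (L t) e)
        (fderiv ℝ (fun y => fderiv ℝ u y e) x₀ e) 0 := by
      have hfe : HasFDerivAt (fun y => fderiv ℝ u y e)
          (fderiv ℝ (fun y => fderiv ℝ u y e) x₀) (L 0) := hL0 ▸ hh.hasFDerivAt
      exact hfe.comp_hasDerivAt 0 (hLd 0)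
    have hdg : deriv g =ᶠ[𝓝 (0 : ℝ)] fun t => fderiv ℝ u (L t) e := by
      filter_upwards [hgd] with t ht using ht.2
    have hdg' : DifferentiableAt ℝ (deriv g) 0 :=
      hderiv2.differentiableAt.congr_of_eventuallyEq hdg
    have h2 : deriv (deriv g) 0 = fderiv ℝ (fun y => fderiv ℝ u y e) x₀ e := by
      rw [hdg.deriv_eq]; exact hderiv2.deriv
    have := secondDeriv_nonpos_of_isLocalMax hmaxg (hgd.mono fun t ht => ht.1) hdg'
    rwa [h2] at this
  have hlap : laplacian u x₀ ≤ 0 := by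
    unfold laplacian
    exact Finset.sum_nonpos fun i _ => key i
  have hgrad : gradNormSq u x₀ = 0 := by
    unfold gradNormSq
    simp [hfzero]
  have hpde0 := hpde x₀ hx₀Ω
  have hcoef : 0 < d₂ + 2 * a₂₂ * u x₀ :=
    add_pos_of_pos_of_nonneg hd₂
      (mul_nonneg (by linarith) (hupos x₀ hx₀mem))
  have hA : (d₂ + 2 * a₂₂ * u x₀) * laplacian u x₀ ≤ 0 :=
    mul_nonpos_of_nonneg_of_nonpos hcoef.le hlap
  have hw0 : 0 ≤ a₂ * w x₀ := mul_nonneg ha₂ (hw x₀ hx₀Ω)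
  nlinarith [mul_pos (lt_trans zero_lt_one h1)
    (show (0 : ℝ) < a₂ * w x₀ + u x₀ - 1 by linarith)]
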